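/- The FSIC-PA overall outage probability equals P̂out = 1 − e^{−α1} + (1 − e^{−αs})^M·e^{−α1}. -/

import Mathlib

open MeasureTheory ProbabilityTheory Real

/-- The interference threshold `τ(g) = max{0, g/α₀ − 1}`. -/
noncomputable def tau (α0 g : ℝ) : ℝ := max 0 (g / α0 - 1)

/-- The FSIC-PA achievable rate of a secondary user with channel gain `h`,
given the primary channel gain `g`. -/
noncomputable def rateFSIC (Ps α0 h g : ℝ) : ℝ :=
  if Ps * h ≤ tau α0 g then Real.logb 2 (1 + Ps * h)
  else Real.logb 2 (1 + tau α0 g)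

/-!
Since `R̂(h, G) = log₂ (1 + min (Ps h) τ(G))`, a secondary user is in outage exactly when
`τ(G) < εs` or `Ps h < εs`, i.e. when `G < α1` or `h < αs`. The overall outage event is therefore
`{G < α1} ∪ ⋂ₘ {Hₘ < αs}`; splitting it along `{G < α1}` and using independence gives
`P(G < α1) + P(G ≥ α1) ∏ₘ P(Hₘ < αs)`, and the exponential distribution function does the rest.
-/

open Set

-- `0 < a` is what the empty index type needs: there the supremum is the junk value `0`.
lemma Real.iSup_lt_iff_of_finite {ι : Type*} [Finite ι] {f : ι → ℝ} {a : ℝ} (ha : 0 < a) :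
    (⨆ i, f i) < a ↔ ∀ i, f i < a := by
  rcases isEmpty_or_nonempty ι with _ | _
  · simp [Real.iSup_of_isEmpty, ha]
  refine ⟨fun h i => (le_ciSup (Set.finite_range f).bddAbove i).trans_lt h, fun h => ?_⟩
  obtain ⟨i, hi⟩ := Finite.exists_max f
  exact (ciSup_le hi).trans_lt (h i)

section ExponentialDistribution

variable {r x : ℝ}

lemma expMeasure_real_Iio (hr : 0 < r) (hx : 0 ≤ x) :
    (expMeasure r).real (Iio x) = 1 - exp (-(r * x)) := by
  have := isProbabilityMeasure_expMeasure hr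
  have hx_null : expMeasure r {x} = 0 :=
    withDensity_absolutelyContinuous _ _ (measure_singleton x)
  rw [measureReal_congr (Iio_ae_eq_Iic' hx_null), ← cdf_eq_real, cdf_expMeasure_eq hr, if_pos hx]

lemma expMeasure_real_Ici (hr : 0 < r) (hx : 0 ≤ x) :
    (expMeasure r).real (Ici x) = exp (-(r * x)) := by
  have := isProbabilityMeasure_expMeasure hr
  rw [← compl_Iio, probReal_compl_eq_one_sub measurableSet_Iio, expMeasure_real_Iio hr hx]
  ring

end ExponentialDistribution

lemma tau_lt_iff {α0 ε g : ℝ} (hα0 : 0 < α0) (hε : 0 < ε) :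
    tau α0 g < ε ↔ g < (1 + ε) * α0 := by
  rw [tau, max_lt_iff, sub_lt_iff_lt_add, div_lt_iff₀ hα0, add_comm ε]
  exact and_iff_right hε

lemma rateFSIC_eq_logb_min (Ps α0 h g : ℝ) :
    rateFSIC Ps α0 h g = logb 2 (1 + min (Ps * h) (tau α0 g)) := by
  unfold rateFSIC
  split_ifs with hle
  · rw [min_eq_left hle]
  · rw [min_eq_right (not_le.mp hle).le]

lemma rateFSIC_lt_logb_iff {Ps α0 ε h g : ℝ} (hPs : 0 < Ps) (hα0 : 0 < α0) (hε : 0 < ε)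
    (hh : 0 ≤ h) :
    rateFSIC Ps α0 h g < logb 2 (1 + ε) ↔ g < (1 + ε) * α0 ∨ h < ε / Ps := by
  have hmin : 0 ≤ min (Ps * h) (tau α0 g) := le_min (by positivity) (le_max_left _ _)
  rw [rateFSIC_eq_logb_min, logb_lt_logb_iff one_lt_two (by linarith) (by linarith),
    add_lt_add_iff_left, min_lt_iff, tau_lt_iff hα0 hε, lt_div_iff₀ hPs, mul_comm h, or_comm]

namespace ProbabilityTheory

variable {Ω β : Type*} [MeasurableSpace Ω] [MeasurableSpace β] {μ : Measure Ω} {M : ℕ}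
  {G : Ω → β} {H : Fin M → Ω → β} {s : Set β} {t : Fin M → Set β}

lemma iIndepFun.measure_preimage_inter_iInter_preimage
    (hindep : iIndepFun (Fin.cons G H : Fin (M + 1) → Ω → β) μ)
    (hs : MeasurableSet s) (ht : ∀ m, MeasurableSet (t m)) :
    μ (G ⁻¹' s ∩ ⋂ m, H m ⁻¹' t m) = μ (G ⁻¹' s) * ∏ m, μ (H m ⁻¹' t m) := by
  have hsets : ∀ i, MeasurableSet ((Fin.cons s t : Fin (M + 1) → Set β) i) :=
    Fin.cases hs ht
  have h := hindep.measure_inter_preimage_eq_mul Finset.univ (fun i _ => hsets i)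
  simp only [Fin.prod_univ_succ, Fin.cons_zero, Fin.cons_succ] at h
  rw [← h]
  congr 1
  ext ω
  simp [Fin.forall_fin_succ]

lemma iIndepFun.measureReal_preimage_union_iInter_preimage [IsFiniteMeasure μ]
    (hindep : iIndepFun (Fin.cons G H : Fin (M + 1) → Ω → β) μ)
    (hG : Measurable G) (hH : ∀ m, Measurable (H m))
    (hs : MeasurableSet s) (ht : ∀ m, MeasurableSet (t m)) :
    μ.real (G ⁻¹' s ∪ ⋂ m, H m ⁻¹' t m) =
      μ.real (G ⁻¹' s) + μ.real (G ⁻¹' sᶜ) * ∏ m, μ.real (H m ⁻¹' t m) := by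
  have hinter : MeasurableSet (G ⁻¹' sᶜ ∩ ⋂ m, H m ⁻¹' t m) :=
    (hG hs.compl).inter (.iInter fun m => hH m (ht m))
  have hdisj : Disjoint (G ⁻¹' s) (G ⁻¹' sᶜ ∩ ⋂ m, H m ⁻¹' t m) :=
    (disjoint_compl_right.preimage G).mono_right inter_subset_left
  rw [← union_sdiff_self, sdiff_eq_compl_inter, ← preimage_compl, measureReal_union hdisj hinter,
    measureReal_def (s := _ ∩ _), hindep.measure_preimage_inter_iInter_preimage hs.compl ht,
    ENNReal.toReal_mul, ENNReal.toReal_prod]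
  rfl

end ProbabilityTheory

theorem fsic_pa_outage_closed_form_general
    {Ω : Type*} [MeasurableSpace Ω] (μ : Measure Ω) [IsProbabilityMeasure μ]
    (M : ℕ)
    (P0 Ps R0 Rs : ℝ) (hP0 : 0 < P0) (hPs : 0 < Ps) (hR0 : 0 < R0) (hRs : 0 < Rs)
    (ε0 εs α0 αs α1 : ℝ)
    (hε0 : ε0 = 2 ^ R0 - 1) (hεs : εs = 2 ^ Rs - 1)
    (hα0 : α0 = ε0 / P0) (hαs : αs = εs / Ps) (hα1 : α1 = (1 + εs) * α0)
    (G : Ω → ℝ) (H : Fin M → Ω → ℝ)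
    (hGmeas : Measurable G) (hHmeas : ∀ m, Measurable (H m))
    (hHnn : ∀ m ω, 0 ≤ H m ω)
    (hGdist : Measure.map G μ = expMeasure 1)
    (hHdist : ∀ m, Measure.map (H m) μ = expMeasure 1)
    (hIndep : iIndepFun
      (Fin.cons G H : Fin (M + 1) → Ω → ℝ) μ)
    :
    (μ {ω | (⨆ m : Fin M, rateFSIC Ps α0 (H m ω) (G ω)) < Rs}).toReal =
      1 - Real.exp (-α1) + (1 - Real.exp (-αs)) ^ M * Real.exp (-α1) := by
  have hεs_pos : 0 < εs := by rw [hεs]; linarith [one_lt_rpow one_lt_two hRs]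
  have hα0_pos : 0 < α0 := by
    rw [hα0, hε0]; exact div_pos (by linarith [one_lt_rpow one_lt_two hR0]) hP0
  have hα1_nonneg : 0 ≤ α1 := by rw [hα1]; positivity
  have hRs_eq : Rs = logb 2 (1 + εs) := by
    rw [hεs, add_sub_cancel, logb_rpow two_pos (by norm_num)]
  have hevent : {ω | (⨆ m : Fin M, rateFSIC Ps α0 (H m ω) (G ω)) < Rs} =
      G ⁻¹' Iio α1 ∪ ⋂ m, H m ⁻¹' Iio αs := by
    ext ω
    simp only [mem_ofPred_eq, Real.iSup_lt_iff_of_finite hRs]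
    simp only [hRs_eq, rateFSIC_lt_logb_iff hPs hα0_pos hεs_pos (hHnn _ ω), ← hα1, ← hαs,
      forall_or_left, mem_union, mem_preimage, mem_Iio, mem_iInter]
  have hG_Iio : μ.real (G ⁻¹' Iio α1) = 1 - exp (-α1) := by
    rw [← map_measureReal_apply hGmeas measurableSet_Iio, hGdist,
      expMeasure_real_Iio one_pos hα1_nonneg, one_mul]
  have hG_Ici : μ.real (G ⁻¹' Ici α1) = exp (-α1) := by
    rw [← map_measureReal_apply hGmeas measurableSet_Ici, hGdist,
      expMeasure_real_Ici one_pos hα1_nonneg, one_mul]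
  have hH_Iio (m : Fin M) : μ.real (H m ⁻¹' Iio αs) = 1 - exp (-αs) := by
    rw [← map_measureReal_apply (hHmeas m) measurableSet_Iio, hHdist m,
      expMeasure_real_Iio one_pos (by rw [hαs]; positivity), one_mul]
  rw [← measureReal_def, hevent, hIndep.measureReal_preimage_union_iInter_preimage hGmeas hHmeas
      measurableSet_Iio (fun _ => measurableSet_Iio), compl_Iio, hG_Iio, hG_Ici,
    Finset.prod_congr rfl fun m _ => hH_Iio m, Finset.prod_const, Finset.card_univ,
    Fintype.card_fin]
  ring

/-- Theorem 2: closed form for the FSIC-PA overall outage probability. -/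
theorem fsic_pa_outage_closed_form
    {Ω : Type*} [MeasurableSpace Ω] (μ : Measure Ω) [IsProbabilityMeasure μ]
    (M : ℕ) (hM : 1 ≤ M)
    (P0 Ps R0 Rs : ℝ) (hP0 : 0 < P0) (hPs : 0 < Ps) (hR0 : 0 < R0) (hRs : 0 < Rs)
    (ε0 εs α0 αs α1 : ℝ)
    (hε0 : ε0 = 2 ^ R0 - 1) (hεs : εs = 2 ^ Rs - 1)
    (hα0 : α0 = ε0 / P0) (hαs : αs = εs / Ps) (hα1 : α1 = (1 + εs) * α0)
    (G : Ω → ℝ) (H : Fin M → Ω → ℝ)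
    (hGmeas : Measurable G) (hHmeas : ∀ m, Measurable (H m))
    (hGnn : ∀ ω, 0 ≤ G ω) (hHnn : ∀ m ω, 0 ≤ H m ω)
    (hGdist : Measure.map G μ = expMeasure 1)
    (hHdist : ∀ m, Measure.map (H m) μ = expMeasure 1)
    (hIndep : iIndepFun
      (Fin.cons G H : Fin (M + 1) → Ω → ℝ) μ)
    (Z : Ω → ℝ) (hZ : ∀ ω, Z ω = ⨆ m : Fin M, H m ω)
    :
    (μ {ω | (⨆ m : Fin M, rateFSIC Ps α0 (H m ω) (G ω)) < Rs}).toReal =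
      1 - Real.exp (-α1) + (1 - Real.exp (-αs)) ^ M * Real.exp (-α1) :=
  fsic_pa_outage_closed_form_general μ M P0 Ps R0 Rs hP0 hPs hR0 hRs ε0 εs α0 αs α1 hε0 hεs hα0 hαs
    hα1 G H hGmeas hHmeas hHnn hGdist hHdist hIndep
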